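/- arXiv:2403.13162 — 2 statements merged into one kernel-verified Lean document; each statement's English description precedes it below -/
import Mathlib

section
/- Let u and v be nonempty strings with u^ω ≠ v^ω. Then the length of the longest common prefix of u^ω and v^ω is strictly less than |u| + |v| - gcd(|u|,|v|); in particular, u^ω = v^ω if and only if their prefixes of length |u| + |v| coincide. -/
/-- `k`-fold concatenation of the string `x` with itself. -/
def listPow {α : Type*} (x : List α) (k : ℕ) : List α := (List.replicate k x).flatten

/-- The omega extension `u^ω = u·u·u···` of a nonempty string `u`,
as an infinite string (function on positions, 0-indexed). -/
def omegaExt {α : Type*} [Inhabited α] (u : List α) (i : ℕ) : α :=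
  u.getD (i % u.length) default

/-! Both `u^ω` and `v^ω` are periodic, with periods `|u|` and `|v|`. If they agree on the first
`|u| + |v| - gcd(|u|,|v|)` positions, that prefix of `u^ω` has both periods, so by the theorem
of Fine and Wilf it has period `gcd(|u|,|v|)`; as this gcd divides both periods, the two
infinite words are then determined by the same prefix of length `gcd(|u|,|v|)`. -/

open Function

section FineWilf

variable {α : Type*}

theorem List.hasPeriod_map_range_iff {f : ℕ → α} {n p : ℕ} :
    ((List.range n).map f).HasPeriod p ↔ ∀ i, i + p < n → f i = f (i + p) := by
  rw [List.hasPeriod_iff_getElem?]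
  refine forall_congr' fun i => ⟨fun h hi => ?_, fun h hi => ?_⟩
  · simpa [List.getElem?_range, show i < n by omega, hi] using h (by simp only [List.length_map, List.length_range]; omega)
  · simp only [List.length_map, List.length_range] at hi
    simp [show i < n by omega, show i + p < n by omega, h (by omega)]

theorem apply_mod_gcd_of_periods_lt_add_sub_gcd {f : ℕ → α} {p q : ℕ}
    (hp : ∀ i, i + p < p + q - p.gcd q → f i = f (i + p))
    (hq : ∀ i, i + q < p + q - p.gcd q → f i = f (i + q)) :
    ∀ i < p + q - p.gcd q, f i = f (i % p.gcd q) := by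
  intro i hi
  have hperiod := (List.hasPeriod_map_range_iff.mpr hp).gcd
    (List.hasPeriod_map_range_iff.mpr hq) (by simp)
  have := List.hasPeriod_iff_forall_getElem?_mod.mp hperiod i (by simpa using hi)
  simpa [List.getElem?_range, hi, (Nat.mod_le i _).trans_lt hi] using this

theorem Function.Periodic.eq_of_forall_lt_add_sub_gcd {f g : ℕ → α} {p q : ℕ}
    (hf : Periodic f p) (hg : Periodic g q) (hp : 0 < p) (hq : 0 < q)
    (h : ∀ i < p + q - p.gcd q, f i = g i) : f = g := by
  have hdp : p.gcd q ≤ p := Nat.gcd_le_left q hp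
  have hdq : p.gcd q ≤ q := Nat.gcd_le_right (m := p) hq
  have hfq : ∀ i, i + q < p + q - p.gcd q → f i = f (i + q) := fun i hi => by
    rw [h i (by omega), h (i + q) hi, hg i]
  have hmod := apply_mod_gcd_of_periods_lt_add_sub_gcd (fun i _ => (hf i).symm) hfq
  funext i
  have hip : i % p < p := Nat.mod_lt i hp
  have hiq : i % q < q := Nat.mod_lt i hq
  calc f i = f (i % p) := (hf.map_mod_nat i).symm
    _ = f (i % p % p.gcd q) := hmod _ (by omega)
    _ = f (i % q % p.gcd q) := by
      rw [Nat.mod_mod_of_dvd _ (Nat.gcd_dvd_left p q), Nat.mod_mod_of_dvd _ (Nat.gcd_dvd_right p q)]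
    _ = f (i % q) := (hmod _ (by omega)).symm
    _ = g (i % q) := h _ (by omega)
    _ = g i := hg.map_mod_nat i

end FineWilf

theorem omegaExt_periodic {α : Type*} [Inhabited α] (u : List α) :
    Periodic (omegaExt u) u.length := fun i => by
  simp [omegaExt]

/-- If `u^ω ≠ v^ω` then `lcp(u^ω, v^ω) < |u| + |v| - gcd(|u|,|v|)`; in particular
`u^ω = v^ω` iff the prefixes of length `|u| + |v|` coincide. -/
theorem omega_lcp_bound {α : Type*} [Inhabited α] (u v : List α)
    (hu : u ≠ []) (hv : v ≠ [])
    (hne : (fun i => omegaExt u i) ≠ (fun i => omegaExt v i)) :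
    (∃ i, i < u.length + v.length - Nat.gcd u.length v.length ∧
      omegaExt u i ≠ omegaExt v i) ∧
    ((∀ i, omegaExt u i = omegaExt v i) ↔
      ∀ i < u.length + v.length, omegaExt u i = omegaExt v i) := by
  have eq_of_agree := (omegaExt_periodic u).eq_of_forall_lt_add_sub_gcd (omegaExt_periodic v)
    (List.length_pos_iff.mpr hu) (List.length_pos_iff.mpr hv)
  refine ⟨?_, fun h i _ => h i, fun h => congrFun (eq_of_agree fun i hi => h i (by omega))⟩
  by_contra! hagree
  exact hne (eq_of_agree hagree)
end

section
/- Let u be a string of length r, π = κ(u) its Karp-Rabin fingerprint, d = b^r mod p, k ≥ 1, and 0 ≤ j ≤ r. Then the fingerprint of u^k·u[1..j] equals (π · G(d, k-1) · (b^j mod p) + κ(u[1..j])) mod p, where G(d, k-1) = (d^{k-1} + ... + d + 1) mod p. -/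
/-- Karp-Rabin fingerprint of `s` with base `b` modulo `p`. -/
def kappa (p b : ℕ) (s : List ℕ) : ℕ :=
  (∑ i ∈ Finset.range s.length, s.getD (s.length - 1 - i) 0 * b ^ i) % p

/-!
Before reduction modulo `p` the fingerprint is a base-`b` numeral, so appending `y` shifts it by
`b ^ |y|`: `κ(x·y) = κ(x)·b^|y| + κ(y)`. Iterating this over `u^k = u·u^(k-1)` gives
`κ(u^k) = κ(u)·(1 + d + ⋯ + d^(k-1))` with `d = b^|u|`, and appending `u[1..j]` contributes the
factor `b^j` and the summand `κ(u[1..j])`. Reduction modulo `p` commutes with all these operations.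
-/

def krVal (b : ℕ) (s : List ℕ) : ℕ :=
  ∑ i ∈ Finset.range s.length, s.getD (s.length - 1 - i) 0 * b ^ i

theorem kappa_eq_krVal_mod (p b : ℕ) (s : List ℕ) : kappa p b s = krVal b s % p := rfl

theorem krVal_append (b : ℕ) (x y : List ℕ) :
    krVal b (x ++ y) = krVal b x * b ^ y.length + krVal b y := by
  simp only [krVal, List.length_append, add_comm x.length, Finset.sum_range_add, add_comm (_ * _)]
  congr 1
  · refine Finset.sum_congr rfl fun i hi => ?_
    rw [Finset.mem_range] at hi
    rw [List.getD_append_right _ _ _ _ (by omega),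
      show y.length + x.length - 1 - i - x.length = y.length - 1 - i by omega]
  · rw [Finset.sum_mul]
    refine Finset.sum_congr rfl fun i hi => ?_
    rw [Finset.mem_range] at hi
    rw [List.getD_append _ _ _ _ (by omega), pow_add,
      show y.length + x.length - 1 - (y.length + i) = x.length - 1 - i by omega]
    ring

theorem length_listPow {α : Type*} (x : List α) (k : ℕ) :
    (listPow x k).length = k * x.length := by
  simp [listPow]

theorem listPow_succ {α : Type*} (x : List α) (k : ℕ) :
    listPow x (k + 1) = x ++ listPow x k := by
  simp [listPow, List.replicate_succ]

theorem krVal_listPow (b : ℕ) (u : List ℕ) (k : ℕ) :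
    krVal b (listPow u k) = krVal b u * ∑ i ∈ Finset.range k, (b ^ u.length) ^ i := by
  induction k with
  | zero => simp [listPow, krVal]
  | succ k ih =>
    rw [listPow_succ, krVal_append, ih, length_listPow, Finset.sum_range_succ, pow_mul]
    ring

theorem kr_power_prefix_general (p b : ℕ) (u : List ℕ) (r k j : ℕ)
    (hr : u.length = r) (hj : j ≤ r) :
    kappa p b (listPow u k ++ u.take j) =
      (kappa p b u * ((∑ i ∈ Finset.range k, (b ^ r % p) ^ i) % p) * (b ^ j % p)
        + kappa p b (u.take j)) % p := by
  have hprefix : (u.take j).length = j := List.length_take_of_le (hr ▸ hj)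
  simp only [kappa_eq_krVal_mod, krVal_append, krVal_listPow, hprefix, hr]
  rw [← ZMod.natCast_eq_natCast_iff']
  push_cast [ZMod.natCast_mod]
  rfl

/-- For `u` of length `r`, `k ≥ 1`, `0 ≤ j ≤ r`, `d = b^r mod p`:
`κ(u^k·u[1..j]) = (κ(u)·G(d,k-1)·(b^j mod p) + κ(u[1..j])) mod p`,
where `G(d,k-1) = (d^{k-1} + ⋯ + d + 1) mod p`. -/
theorem kr_power_prefix (p b : ℕ) (hp : p.Prime) (u : List ℕ) (r k j : ℕ)
    (hr : u.length = r) (hk : 1 ≤ k) (hj : j ≤ r) :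
    kappa p b (listPow u k ++ u.take j) =
      (kappa p b u * ((∑ i ∈ Finset.range k, (b ^ r % p) ^ i) % p) * (b ^ j % p)
        + kappa p b (u.take j)) % p :=
  kr_power_prefix_general p b u r k j hr hj
end
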